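/- Let z ∈ (0,1] be such that the spectral radius of F(z) is strictly less than 1 (so I − F(z) is invertible and Σ_{k=0}^{∞} F(z)^k = (I − F(z))^{−1}). Then L̃ has finite entries, the series Σ_{x∈ℤ} z^{−x} ℙ(J_{τ^{x}}) L̃ converges entrywise, and Σ_{x∈ℤ} z^{−x} ℙ(J_{τ^{x}}) L̃ = (I − F(z))^{−1}. -/

import Mathlib

/- Framework: a discrete-time, discrete-space upward skip-free Markov additive chain (MAC)
on ℤ × {1,…,N}, with one-step transition matrices `A m` (for a level increment of `m`), is
encoded combinatorially: the law of the chain started at a state `s` is determined by the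
weights of its finite trajectories, so every probability/expectation appearing in the paper
can be written as a (countable) sum of trajectory weights. -/

attribute [local instance] Classical.propDecidable

noncomputable section

namespace MACPaper

/-- state space: level × phase -/
abbrev S (N : ℕ) := ℤ × Fin N

variable {N : ℕ}

/-- one-step transition weight -/
def step (A : ℤ → Matrix (Fin N) (Fin N) ℝ) (s t : S N) : ℝ :=
  A (t.1 - s.1) s.2 t.2

/-- probability weight of a finite trajectory, given by the list of successive states after `s` -/
def wt (A : ℤ → Matrix (Fin N) (Fin N) ℝ) : S N → List (S N) → ℝ
  | _, [] => 1
  | s, t :: r => step A s t * wt A t r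

/-- the trajectory (as a function of time) determined by start `s` and subsequent states `l` -/
def pos (s : S N) (l : List (S N)) : ℕ → S N
  | 0 => s
  | n + 1 => l.getD n s

/-- expectation of a path functional over trajectories of length `n` started at `s` -/
def expec (A : ℤ → Matrix (Fin N) (Fin N) ℝ) (s : S N) (n : ℕ)
    (f : (ℕ → S N) → ℝ) : ℝ :=
  ∑' l : { l : List (S N) // l.length = n }, f (pos s l.1) * wt A s l.1

/-- probability of an event depending on the trajectory up to time `n` -/
def prob (A : ℤ → Matrix (Fin N) (Fin N) ℝ) (s : S N) (n : ℕ)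
    (E : (ℕ → S N) → Prop) : ℝ :=
  expec A s n fun p => if E p then 1 else 0

/-- F(z) = Σ_{m=-1}^{∞} z^m A_{-m}   (entrywise) -/
def Fmat (A : ℤ → Matrix (Fin N) (Fin N) ℝ) (z : ℝ) : Matrix (Fin N) (Fin N) ℝ :=
  Matrix.of fun i j => ∑' m : ℤ, z ^ m * A (-m) i j

/-- P = Σ_m A_m  (entrywise) -/
def Pmat (A : ℤ → Matrix (Fin N) (Fin N) ℝ) : Matrix (Fin N) (Fin N) ℝ :=
  Matrix.of fun i j => ∑' m : ℤ, A m i j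

/-- `τ^{x} = n`: the chain first hits level `x` at time `n` -/
def hitsAt (x : ℤ) (n : ℕ) (p : ℕ → S N) : Prop :=
  (p n).1 = x ∧ ∀ k < n, (p k).1 ≠ x

/-- matrix 𝔼(v^{τ^{x}}; τ^{x} < ∞, J_{τ^{x}}), chain started at (0,·) -/
def hitMat (A : ℤ → Matrix (Fin N) (Fin N) ℝ) (v : ℝ) (x : ℤ) :
    Matrix (Fin N) (Fin N) ℝ :=
  Matrix.of fun i j =>
    ∑' n : ℕ, v ^ n * prob A ((0 : ℤ), i) n fun p => hitsAt x n p ∧ (p n).2 = j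

/-- v-discounted occupation mass matrix at level `x` (infinite horizon), chain started at (0,·) -/
def occMat (A : ℤ → Matrix (Fin N) (Fin N) ℝ) (v : ℝ) (x : ℤ) :
    Matrix (Fin N) (Fin N) ℝ :=
  Matrix.of fun i j =>
    ∑' k : ℕ, v ^ k * prob A ((0 : ℤ), i) k fun p => p k = (x, j)

/-- v-discounted occupation mass at level 0 up to the first hitting time of level `n` -/
def occUpToMat (A : ℤ → Matrix (Fin N) (Fin N) ℝ) (v : ℝ) (n : ℤ) :
    Matrix (Fin N) (Fin N) ℝ :=
  Matrix.of fun i j =>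
    ∑' k : ℕ, v ^ k * prob A ((0 : ℤ), i) k fun p =>
      p k = ((0 : ℤ), j) ∧ ∀ m < k, (p m).1 ≠ n

/-- the fundamental matrix G = ℙ(J_{τ^{1}}) -/
def Gmat (A : ℤ → Matrix (Fin N) (Fin N) ℝ) : Matrix (Fin N) (Fin N) ℝ :=
  hitMat A 1 1

/-- L̃ : occupation mass matrix at level 0, infinite horizon -/
def Ltilde (A : ℤ → Matrix (Fin N) (Fin N) ℝ) : Matrix (Fin N) (Fin N) ℝ :=
  occMat A 1 0

/-- the first scale matrix W(n) = (G^{-n} - ℙ(J_{τ^{-n}})) L̃ -/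
def Wmat (A : ℤ → Matrix (Fin N) (Fin N) ℝ) (n : ℕ) : Matrix (Fin N) (Fin N) ℝ :=
  ((Gmat A)⁻¹ ^ n - hitMat A 1 (-(n : ℤ))) * Ltilde A

/-- v-discounted first scale matrix W_v(n) = (G_v^{-n} - 𝔼(v^{τ^{-n}}; J_{τ^{-n}})) L̃_v -/
def WmatV (A : ℤ → Matrix (Fin N) (Fin N) ℝ) (v : ℝ) (n : ℕ) :
    Matrix (Fin N) (Fin N) ℝ :=
  ((hitMat A v 1)⁻¹ ^ n - hitMat A v (-(n : ℤ))) * occMat A v 0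

/-- the second scale matrix Z(z,n) = z^{-n}[I + Σ_{k=0}^{n} z^k W(k) (I - F(z))] -/
def Zmat (A : ℤ → Matrix (Fin N) (Fin N) ℝ) (z : ℝ) (n : ℕ) :
    Matrix (Fin N) (Fin N) ℝ :=
  z⁻¹ ^ n • (1 + (∑ k ∈ Finset.range (n + 1), z ^ k • Wmat A k) * (1 - Fmat A z))

/-- matrix 𝔼(v^{τ_a^+}; τ_a^+ < τ_{-b}^-, J_{τ_a^+}) (upward exit from the strip [-b,a]) -/
def upExitMat (A : ℤ → Matrix (Fin N) (Fin N) ℝ) (v : ℝ) (a b : ℤ) :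
    Matrix (Fin N) (Fin N) ℝ :=
  Matrix.of fun i j =>
    ∑' n : ℕ, v ^ n * prob A ((0 : ℤ), i) n fun p =>
      a ≤ (p n).1 ∧ (∀ k < n, -b < (p k).1 ∧ (p k).1 < a) ∧ (p n).2 = j

/-- matrix 𝔼(z^{-X_{τ_{-b}^-}}; τ_{-b}^- < τ_a^+, J_{τ_{-b}^-}) (downward exit from [-b,a]) -/
def downExitMat (A : ℤ → Matrix (Fin N) (Fin N) ℝ) (z : ℝ) (a b : ℤ) :
    Matrix (Fin N) (Fin N) ℝ :=
  Matrix.of fun i j =>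
    ∑' n : ℕ, expec A ((0 : ℤ), i) n fun p =>
      if (p n).1 ≤ -b ∧ (∀ k < n, -b < (p k).1 ∧ (p k).1 < a) ∧ (p n).2 = j
      then z ^ (-(p n).1) else 0

/-- matrix 𝔼(z^{-X_{τ_{-b}^-}}; τ_{-b}^- < ∞, J_{τ_{-b}^-}) (one-sided downward exit) -/
def oneDownMat (A : ℤ → Matrix (Fin N) (Fin N) ℝ) (z : ℝ) (b : ℤ) :
    Matrix (Fin N) (Fin N) ℝ :=
  Matrix.of fun i j =>
    ∑' n : ℕ, expec A ((0 : ℤ), i) n fun p =>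
      if (p n).1 ≤ -b ∧ (∀ k < n, -b < (p k).1) ∧ (p n).2 = j
      then z ^ (-(p n).1) else 0

/-- two-sided Skorokhod reflection of the level path `X` in [-d,0], started at `x`:
the regulated process H -/
def reflH (d : ℕ) (x : ℤ) (X : ℕ → ℤ) : ℕ → ℤ
  | 0 => x
  | n + 1 =>
      reflH d x X n + (X (n + 1) - X n)
        - max (reflH d x X n + (X (n + 1) - X n)) 0
        + max (-(d : ℤ) - (reflH d x X n + (X (n + 1) - X n))) 0

/-- upper regulator R^+ of the two-sided reflection in [-d,0] -/
def reflRp (d : ℕ) (x : ℤ) (X : ℕ → ℤ) : ℕ → ℤ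
  | 0 => 0
  | n + 1 => reflRp d x X n + max (reflH d x X n + (X (n + 1) - X n)) 0

/-- lower regulator R^- of the two-sided reflection in [-d,0] -/
def reflRm (d : ℕ) (x : ℤ) (X : ℕ → ℤ) : ℕ → ℤ
  | 0 => 0
  | n + 1 => reflRm d x X n + max (-(d : ℤ) - (reflH d x X n + (X (n + 1) - X n))) 0

/-- lower regulator of the one-sided reflection at -b : R^{-b}_n = -b - min(-b, min_{k≤n} X_k) -/
def lowReg (b : ℤ) (X : ℕ → ℤ) (n : ℕ) : ℤ :=
  -b - min (-b) ((Finset.range (n + 1)).inf' Finset.nonempty_range_add_one X)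

/-! By translation invariance in the level, the `z`-transform `∑ₓ z^{-x} ℙ(X_k = x, J_k = j)` of
the `k`-step transition probabilities is `(F(z)^k)_{ij}`. By Gelfand's formula the spectral
condition makes `∑ₖ F(z)^k` converge, to `(I - F(z))⁻¹`; so the `z`-transform of the occupation
matrices of all levels is `(I - F(z))⁻¹`, and each of them, `L̃` in particular, is finite.
Splitting a path at its first visit to level `x` (Markov property and translation invariance
again) factors the occupation matrix of level `x` as `ℙ(J_{τ^{x}}) L̃`. All sums are manipulated
in `ℝ≥0∞`, where they can be reordered freely, and only then converted to real numbers. -/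

end MACPaper

open scoped ENNReal

section SpectralRadius

open Filter

theorem spectrum.spectralRadius_lt_one_of_forall_norm_lt_one {A : Type*} [NormedRing A]
    [NormedAlgebra ℂ A] [CompleteSpace A] (a : A) (h : ∀ μ ∈ spectrum ℂ a, ‖μ‖ < 1) :
    spectralRadius ℂ a < 1 := by
  rcases (spectrum ℂ a).eq_empty_or_nonempty with hempty | hne
  · simp [spectralRadius, hempty]
  · exact_mod_cast spectrum.spectralRadius_lt_of_forall_lt_of_nonempty hne (r := 1)
      fun μ hμ => by exact_mod_cast h μ hμ

theorem spectrum.summable_norm_pow_of_spectralRadius_lt_one {A : Type*} [NormedRing A]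
    [NormedAlgebra ℂ A] [CompleteSpace A] (a : A) (h : spectralRadius ℂ a < 1) :
    Summable fun n : ℕ => ‖a ^ n‖ := by
  obtain ⟨r, hρr, hr1⟩ := ENNReal.lt_iff_exists_nnreal_btwn.mp h
  have hev : ∀ᶠ n : ℕ in atTop, (‖a ^ n‖₊ : ℝ≥0∞) ^ (1 / n : ℝ) < r :=
    (spectrum.pow_nnnorm_pow_one_div_tendsto_nhds_spectralRadius a).eventually_lt_const hρr
  refine summable_of_isBigO_nat
    (summable_geometric_of_lt_one r.coe_nonneg (by exact_mod_cast hr1))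
    (Asymptotics.IsBigO.of_bound 1 ?_)
  filter_upwards [hev, eventually_gt_atTop 0] with n hn hn0
  have hle : (‖a ^ n‖₊ : ℝ≥0∞) ≤ (r : ℝ≥0∞) ^ n :=
    calc (‖a ^ n‖₊ : ℝ≥0∞) = ((‖a ^ n‖₊ : ℝ≥0∞) ^ (1 / n : ℝ)) ^ (n : ℝ) := by
          rw [← ENNReal.rpow_mul, one_div, inv_mul_cancel₀ (by positivity), ENNReal.rpow_one]
      _ ≤ r ^ (n : ℝ) := ENNReal.rpow_le_rpow hn.le n.cast_nonneg
      _ = r ^ n := ENNReal.rpow_natCast _ n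
  have : ‖a ^ n‖₊ ≤ r ^ n := by exact_mod_cast hle
  simpa using NNReal.coe_le_coe.mpr this

end SpectralRadius

open Finset in
theorem ENNReal.tsum_mul_tsum_eq_tsum_sum_antidiagonal (f g : ℕ → ℝ≥0∞) :
    (∑' n, f n) * ∑' n, g n = ∑' n, ∑ kl ∈ antidiagonal n, f kl.1 * g kl.2 := by
  simp_rw [← ENNReal.tsum_mul_right, ← ENNReal.tsum_mul_left]
  rw [← ENNReal.tsum_prod' (f := fun kl : ℕ × ℕ => f kl.1 * g kl.2),
    ← HasAntidiagonal.sigmaAntidiagonalEquivProd.tsum_eq, ENNReal.tsum_sigma']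
  exact tsum_congr fun n => Finset.tsum_subtype (antidiagonal n) fun kl => f kl.1 * g kl.2

namespace Matrix

section LinftyOp

attribute [local instance] Matrix.linftyOpNormedAddCommGroup Matrix.linftyOpNormedRing
  Matrix.linftyOpNormedAlgebra

theorem norm_apply_le_linfty_opNorm {m n α : Type*} [Fintype m] [Fintype n]
    [NormedAddCommGroup α] (M : Matrix m n α) (i : m) (j : n) : ‖M i j‖ ≤ ‖M‖ := by
  rw [linfty_opNorm_def, ← coe_nnnorm, NNReal.coe_le_coe]
  exact (Finset.single_le_sum (f := fun j => ‖M i j‖₊) (fun _ _ => zero_le)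
    (Finset.mem_univ j)).trans
    (Finset.le_sup (f := fun i => ∑ j, ‖M i j‖₊) (Finset.mem_univ i))

theorem summable_pow_of_spectrum_lt_one {n : Type*} [Fintype n] [DecidableEq n]
    (M : Matrix n n ℝ) (h : ∀ μ ∈ spectrum ℂ (M.map Complex.ofReal), ‖μ‖ < 1) :
    Summable fun k : ℕ => M ^ k := by
  have : CompleteSpace (Matrix n n ℂ) := FiniteDimensional.complete ℂ _
  have hnorm := spectrum.summable_norm_pow_of_spectralRadius_lt_one _
    (spectrum.spectralRadius_lt_one_of_forall_norm_lt_one _ h)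
  have hmap (k : ℕ) : M.map Complex.ofReal ^ k = (M ^ k).map Complex.ofReal :=
    (map_pow (Complex.ofRealHom.mapMatrix : Matrix n n ℝ →+* _) M k).symm
  refine Pi.summable.mpr fun i => Pi.summable.mpr fun j => hnorm.of_norm_bounded fun k => ?_
  simpa [hmap, Complex.norm_real] using
    norm_apply_le_linfty_opNorm (M.map Complex.ofReal ^ k) i j

end LinftyOp

theorem hasSum_pow_of_summable {n R : Type*} [Fintype n] [DecidableEq n] [CommRing R]
    [TopologicalSpace R] [IsTopologicalRing R] [T2Space R] {M : Matrix n n R}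
    (h : Summable fun k : ℕ => M ^ k) :
    IsUnit (1 - M) ∧ HasSum (fun k : ℕ => M ^ k) (1 - M)⁻¹ := by
  have hinv := h.one_sub_mul_tsum_pow
  refine ⟨(isUnit_iff_isUnit_det _).mpr (isUnit_det_of_right_inverse hinv), ?_⟩
  rw [inv_eq_right_inv hinv]
  exact h.hasSum

theorem map_ofReal_pow {n : Type*} [Fintype n] [DecidableEq n] {M : Matrix n n ℝ}
    (hM : ∀ i j, 0 ≤ M i j) (k : ℕ) :
    M.map ENNReal.ofReal ^ k = (M ^ k).map ENNReal.ofReal := by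
  induction k with
  | zero => simp
  | succ k ih =>
    ext i j
    rw [pow_succ, pow_succ, ih, mul_apply, map_apply, mul_apply,
      ENNReal.ofReal_sum_of_nonneg fun c _ => mul_nonneg (pow_apply_nonneg hM k i c) (hM c j)]
    simp [ENNReal.ofReal_mul (pow_apply_nonneg hM k _ _)]

end Matrix

namespace MACPaper

variable {N : ℕ} {A : ℤ → Matrix (Fin N) (Fin N) ℝ}

section Paths

abbrev Traj (N n : ℕ) := { l : List (S N) // l.length = n }

-- The prefix `e` marks the `ℝ≥0∞`-valued counterpart of a real quantity of the paper:
-- `eprob` of `prob`, `eocc A x` of `occMat A 1 x`, `ehit` of `hitMat A 1`, `eFmat` of `Fmat`.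
def estep (A : ℤ → Matrix (Fin N) (Fin N) ℝ) (s t : S N) : ℝ≥0∞ :=
  ENNReal.ofReal (step A s t)

def ewt (A : ℤ → Matrix (Fin N) (Fin N) ℝ) : S N → List (S N) → ℝ≥0∞
  | _, [] => 1
  | s, t :: r => estep A s t * ewt A t r

def eprob (A : ℤ → Matrix (Fin N) (Fin N) ℝ) (s : S N) (n : ℕ)
    (E : (ℕ → S N) → Prop) : ℝ≥0∞ :=
  ∑' l : Traj N n, (if E (pos s l.1) then 1 else 0) * ewt A s l.1

lemma wt_nonneg (hA : ∀ m i j, 0 ≤ A m i j) (s : S N) (l : List (S N)) : 0 ≤ wt A s l := by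
  induction l generalizing s with
  | nil => exact zero_le_one
  | cons t r ih => exact mul_nonneg (hA _ _ _) (ih t)

lemma ewt_eq_ofReal (hA : ∀ m i j, 0 ≤ A m i j) (s : S N) (l : List (S N)) :
    ewt A s l = ENNReal.ofReal (wt A s l) := by
  induction l generalizing s with
  | nil => simp [ewt, wt]
  | cons t r ih =>
    rw [ewt, wt, ih t, estep, ENNReal.ofReal_mul (p := step A s t) (hA _ _ _)]

lemma prob_eq_toReal (hA : ∀ m i j, 0 ≤ A m i j) (s : S N) (n : ℕ) (E : (ℕ → S N) → Prop) :
    prob A s n E = (eprob A s n E).toReal := by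
  unfold prob expec eprob
  rw [ENNReal.tsum_toReal_eq fun l => ENNReal.mul_ne_top (by split_ifs <;> simp)
    (by simp [ewt_eq_ofReal hA])]
  refine tsum_congr fun l => ?_
  by_cases hE : E (pos s l.1) <;> simp [hE, ewt_eq_ofReal hA, wt_nonneg hA]

lemma pos_nil (s : S N) : pos s [] = fun _ => s := by
  funext n
  cases n <;> rfl

-- `pos` pads a path with its start state, so the two paddings differ past the end of `r`.
lemma pos_cons (s t : S N) {r : List (S N)} {n : ℕ} (h : n ≤ r.length) :
    pos s (t :: r) (n + 1) = pos t r n := by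
  cases n with
  | zero => rfl
  | succ m =>
    simp [pos, List.getD_eq_getElem?_getD, List.getElem?_eq_getElem (show m < r.length by omega)]

lemma eprob_zero (s : S N) (E : (ℕ → S N) → Prop) :
    eprob A s 0 E = if E (fun _ => s) then 1 else 0 := by
  rw [eprob, tsum_eq_single (⟨[], rfl⟩ : Traj N 0) fun l hl =>
    absurd (Subtype.ext (List.length_eq_zero_iff.mp l.2)) hl]
  simp [ewt, pos_nil]

def Traj.consEquiv (n : ℕ) : S N × Traj N n ≃ Traj N (n + 1) where
  toFun p := ⟨p.1 :: p.2.1, by simp [p.2.2]⟩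
  invFun l := (l.1.head (List.ne_nil_of_length_pos (by omega)), ⟨l.1.tail, by simp [l.2]⟩)
  left_inv p := rfl
  right_inv := fun ⟨l, hl⟩ => by
    cases l with
    | nil => simp at hl
    | cons a r => rfl

lemma eprob_succ (s : S N) (n : ℕ) (E : (ℕ → S N) → Prop) (E' : S N → (ℕ → S N) → Prop)
    (h : ∀ (t : S N) (r : Traj N n), E (pos s (t :: r.1)) ↔ E' t (pos t r.1)) :
    eprob A s (n + 1) E = ∑' t : S N, estep A s t * eprob A t n (E' t) := by
  rw [eprob, ← (Traj.consEquiv n).tsum_eq, ENNReal.tsum_prod']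
  refine tsum_congr fun t => ?_
  rw [eprob, ← ENNReal.tsum_mul_left]
  refine tsum_congr fun r => ?_
  change (if E (pos s (t :: r.1)) then 1 else 0) * (estep A s t * ewt A t r.1) = _
  rw [if_congr (h t r) rfl rfl]
  ring

def shiftPt (y : ℤ) : S N ≃ S N := (Equiv.addRight y).prodCongr (Equiv.refl _)

@[simp]
lemma shiftPt_apply (y : ℤ) (u : S N) : shiftPt y u = (u.1 + y, u.2) := rfl

lemma pos_map_shiftPt (y : ℤ) (s : S N) (l : List (S N)) :
    pos (shiftPt y s) (l.map (shiftPt y)) = shiftPt y ∘ pos s l := by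
  funext n
  cases n with
  | zero => rfl
  | succ m => exact List.getD_map _ _ _

lemma ewt_map_shiftPt (y : ℤ) (s : S N) (l : List (S N)) :
    ewt A (shiftPt y s) (l.map (shiftPt y)) = ewt A s l := by
  induction l generalizing s with
  | nil => rfl
  | cons t r ih =>
    rw [List.map_cons, ewt, ewt, ih]
    simp [estep, step]

def Traj.mapEquiv (e : S N ≃ S N) (n : ℕ) : Traj N n ≃ Traj N n :=
  (Equiv.listEquivOfEquiv e).subtypeEquiv fun l => by simp [Equiv.listEquivOfEquiv]

lemma eprob_shiftPt (y : ℤ) (s : S N) (n : ℕ) (E : (ℕ → S N) → Prop) :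
    eprob A (shiftPt y s) n E = eprob A s n fun p => E (shiftPt y ∘ p) := by
  rw [eprob, ← (Traj.mapEquiv (shiftPt y) n).tsum_eq]
  exact tsum_congr fun l => by
    simp only [Traj.mapEquiv, Equiv.subtypeEquiv_apply, Equiv.listEquivOfEquiv, Equiv.coe_fn_mk,
      pos_map_shiftPt, ewt_map_shiftPt]

lemma eprob_eq_eprob_level_zero (t : S N) (n : ℕ) (E : (ℕ → S N) → Prop) :
    eprob A t n E = eprob A ((0 : ℤ), t.2) n fun p => E (shiftPt t.1 ∘ p) := by
  rw [← eprob_shiftPt]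
  simp

end Paths

section Renewal

open Finset

def nStepProb (A : ℤ → Matrix (Fin N) (Fin N) ℝ) (k : ℕ) (x : ℤ) (i j : Fin N) : ℝ≥0∞ :=
  eprob A ((0 : ℤ), i) k fun p => p k = (x, j)

def hitProb (A : ℤ → Matrix (Fin N) (Fin N) ℝ) (n : ℕ) (x : ℤ) (i j : Fin N) : ℝ≥0∞ :=
  eprob A ((0 : ℤ), i) n fun p => hitsAt x n p ∧ (p n).2 = j

lemma nStepProb_zero (x : ℤ) (i j : Fin N) :
    nStepProb A 0 x i j = if x = 0 ∧ i = j then 1 else 0 := by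
  simp [nStepProb, eprob_zero, Prod.ext_iff, eq_comm]

lemma hitProb_zero (x : ℤ) (i j : Fin N) :
    hitProb A 0 x i j = if x = 0 ∧ i = j then 1 else 0 := by
  simp [hitProb, eprob_zero, hitsAt, eq_comm]

lemma hitProb_succ_level_zero (n : ℕ) (i j : Fin N) : hitProb A (n + 1) 0 i j = 0 := by
  refine ENNReal.tsum_eq_zero.mpr fun l => ?_
  rw [if_neg fun h => h.1.2 0 n.succ_pos rfl, zero_mul]

lemma nStepProb_succ (k : ℕ) (x : ℤ) (i j : Fin N) :
    nStepProb A (k + 1) x i j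
      = ∑' t : S N, estep A ((0 : ℤ), i) t * nStepProb A k (x - t.1) t.2 j := by
  rw [nStepProb, eprob_succ _ _ _ (fun t p => p k = (x, j)) fun t r => by
    rw [pos_cons _ _ r.2.ge]]
  refine tsum_congr fun t => ?_
  rw [eprob_eq_eprob_level_zero, nStepProb]
  congr! 2 with p
  simp [Prod.ext_iff, eq_sub_iff_add_eq]

lemma hitProb_succ {x : ℤ} (hx : x ≠ 0) (n : ℕ) (i j : Fin N) :
    hitProb A (n + 1) x i j
      = ∑' t : S N, estep A ((0 : ℤ), i) t * hitProb A n (x - t.1) t.2 j := by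
  rw [hitProb, eprob_succ _ _ _ (fun t p => hitsAt x n p ∧ (p n).2 = j) fun t r => ?_]
  · refine tsum_congr fun t => ?_
    rw [eprob_eq_eprob_level_zero, hitProb]
    congr! 2 with p
    simp [hitsAt, eq_sub_iff_add_eq]
  · have hlater : (∀ m < n, (pos ((0 : ℤ), i) (t :: r.1) (m + 1)).1 ≠ x) ↔
        ∀ m < n, (pos t r.1 m).1 ≠ x :=
      forall₂_congr fun m hm => by rw [pos_cons _ _ (by omega : m ≤ r.1.length)]
    simp only [hitsAt, Nat.forall_lt_succ_left, pos_cons _ _ r.2.ge, hlater]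
    simp [pos, hx.symm]

lemma sum_hitProb_level_zero (k : ℕ) (i j : Fin N) :
    ∑ nm ∈ antidiagonal k, ∑ c, hitProb A nm.1 0 i c * nStepProb A nm.2 0 c j
      = nStepProb A k 0 i j := by
  rw [sum_eq_single_of_mem (0, k) (by simp) fun nm hnm hne => ?_]
  · simp [hitProb_zero]
  · obtain ⟨n, m⟩ := nm
    obtain ⟨n, rfl⟩ := Nat.exists_eq_succ_of_ne_zero fun h : n = 0 =>
      hne (by simp_all [HasAntidiagonal.mem_antidiagonal])
    simp [hitProb_succ_level_zero]

theorem nStepProb_eq_sum_hitProb (k : ℕ) (x : ℤ) (i j : Fin N) :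
    nStepProb A k x i j
      = ∑ nm ∈ antidiagonal k, ∑ c, hitProb A nm.1 x i c * nStepProb A nm.2 0 c j := by
  induction k generalizing x i with
  | zero => simp [nStepProb_zero, hitProb_zero]
  | succ k ih =>
    rcases eq_or_ne x 0 with rfl | hx
    · exact (sum_hitProb_level_zero _ i j).symm
    rw [Nat.sum_antidiagonal_succ, nStepProb_succ]
    simp only [hitProb_zero, hx, false_and, if_false, zero_mul, sum_const_zero, zero_add,
      hitProb_succ hx, ← ENNReal.tsum_mul_right, ih, mul_sum, ← mul_assoc]
    rw [Summable.tsum_finsetSum fun _ _ => ENNReal.summable]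
    refine sum_congr rfl fun nm _ => ?_
    exact Summable.tsum_finsetSum fun _ _ => ENNReal.summable

def eocc (A : ℤ → Matrix (Fin N) (Fin N) ℝ) (x : ℤ) (i j : Fin N) : ℝ≥0∞ :=
  ∑' k, nStepProb A k x i j

def ehit (A : ℤ → Matrix (Fin N) (Fin N) ℝ) (x : ℤ) (i j : Fin N) : ℝ≥0∞ :=
  ∑' n, hitProb A n x i j

theorem eocc_eq_sum_ehit_mul (x : ℤ) (i j : Fin N) :
    eocc A x i j = ∑ c, ehit A x i c * eocc A 0 c j := by
  calc eocc A x i j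
      = ∑' k, ∑ c, ∑ nm ∈ antidiagonal k, hitProb A nm.1 x i c * nStepProb A nm.2 0 c j :=
        tsum_congr fun k => by rw [nStepProb_eq_sum_hitProb, sum_comm]
    _ = ∑ c, ehit A x i c * eocc A 0 c j := by
        rw [Summable.tsum_finsetSum fun _ _ => ENNReal.summable]
        exact sum_congr rfl fun c _ => (ENNReal.tsum_mul_tsum_eq_tsum_sum_antidiagonal
          (hitProb A · x i c) (nStepProb A · 0 c j)).symm

lemma ehit_le_eocc (x : ℤ) (i j : Fin N) : ehit A x i j ≤ eocc A x i j :=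
  calc ehit A x i j = ehit A x i j * nStepProb A 0 0 j j := by simp [nStepProb_zero]
    _ ≤ ehit A x i j * eocc A 0 j j := by gcongr; exact ENNReal.le_tsum 0
    _ ≤ eocc A x i j := by
        rw [eocc_eq_sum_ehit_mul x i j]
        exact single_le_sum (f := fun c => ehit A x i c * eocc A 0 c j) (by simp) (mem_univ j)

end Renewal

section GeneratingFunction

def zWeight (z : ℝ) (x : ℤ) : ℝ≥0∞ := ENNReal.ofReal (z ^ (-x))

def eFmat (A : ℤ → Matrix (Fin N) (Fin N) ℝ) (z : ℝ) : Matrix (Fin N) (Fin N) ℝ≥0∞ :=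
  Matrix.of fun i j => ∑' m : ℤ, zWeight z m * ENNReal.ofReal (A m i j)

variable {z : ℝ}

lemma zWeight_add (hz0 : 0 < z) (x y : ℤ) : zWeight z (x + y) = zWeight z x * zWeight z y := by
  rw [zWeight, neg_add, zpow_add₀ hz0.ne', ENNReal.ofReal_mul (zpow_pos hz0 _).le]
  rfl

lemma zWeight_ne_zero (hz0 : 0 < z) (x : ℤ) : zWeight z x ≠ 0 :=
  (ENNReal.ofReal_pos.mpr (zpow_pos hz0 _)).ne'

lemma toReal_zWeight (hz0 : 0 < z) (x : ℤ) : (zWeight z x).toReal = z ^ (-x) :=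
  ENNReal.toReal_ofReal (zpow_pos hz0 _).le

lemma tsum_zWeight_mul_sub (hz0 : 0 < z) (f : ℤ → ℝ≥0∞) (y : ℤ) :
    ∑' x, zWeight z x * f (x - y) = zWeight z y * ∑' x, zWeight z x * f x := by
  rw [← (Equiv.addRight y).tsum_eq, ← ENNReal.tsum_mul_left]
  refine tsum_congr fun x => ?_
  rw [Equiv.coe_addRight, add_sub_cancel_right, zWeight_add hz0, mul_comm (zWeight z x),
    mul_assoc]

lemma tsum_estep_mul_zWeight (i : Fin N) (g : Fin N → ℝ≥0∞) :
    ∑' t : S N, estep A ((0 : ℤ), i) t * (zWeight z t.1 * g t.2)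
      = ∑ c, eFmat A z i c * g c := by
  rw [ENNReal.tsum_prod', ENNReal.tsum_comm, tsum_fintype]
  refine Finset.sum_congr rfl fun c _ => ?_
  simp only [eFmat, Matrix.of_apply, ← ENNReal.tsum_mul_right, estep, step, sub_zero]
  exact tsum_congr fun m => by ring

theorem tsum_zWeight_mul_nStepProb (hz0 : 0 < z) (k : ℕ) (i j : Fin N) :
    ∑' x, zWeight z x * nStepProb A k x i j = (eFmat A z ^ k) i j := by
  induction k generalizing i with
  | zero =>
    rw [tsum_eq_single 0 fun x hx => by simp [nStepProb_zero, hx]]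
    simp [nStepProb_zero, zWeight, Matrix.one_apply]
  | succ k ih =>
    calc ∑' x, zWeight z x * nStepProb A (k + 1) x i j
        = ∑' t : S N,
            estep A ((0 : ℤ), i) t * ∑' x, zWeight z x * nStepProb A k (x - t.1) t.2 j := by
          simp_rw [nStepProb_succ, ← ENNReal.tsum_mul_left, mul_left_comm (zWeight z _)]
          exact ENNReal.tsum_comm
      _ = ∑' t : S N,
            estep A ((0 : ℤ), i) t * (zWeight z t.1 * (eFmat A z ^ k) t.2 j) := by
          refine tsum_congr fun t => ?_
          rw [tsum_zWeight_mul_sub hz0 (nStepProb A k · t.2 j), ih]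
      _ = (eFmat A z ^ (k + 1)) i j := by
          rw [tsum_estep_mul_zWeight i (fun c => (eFmat A z ^ k) c j), pow_succ',
            Matrix.mul_apply]

theorem tsum_zWeight_mul_eocc (hz0 : 0 < z) (i j : Fin N) :
    ∑' x, zWeight z x * eocc A x i j = ∑' k, (eFmat A z ^ k) i j := by
  simp_rw [eocc, ← ENNReal.tsum_mul_left, ← tsum_zWeight_mul_nStepProb hz0]
  exact ENNReal.tsum_comm

lemma eocc_ne_top (hz0 : 0 < z) {i j : Fin N} (h : ∑' x, zWeight z x * eocc A x i j ≠ ⊤)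
    (x : ℤ) : eocc A x i j ≠ ⊤ := by
  intro htop
  refine h (top_le_iff.mp ?_)
  calc ⊤ = zWeight z x * eocc A x i j := by rw [htop, ENNReal.mul_top (zWeight_ne_zero hz0 x)]
    _ ≤ _ := ENNReal.le_tsum x

end GeneratingFunction

section ToReal

variable {z : ℝ}

lemma summable_zpow_neg_mul (hA : ∀ m i j, 0 ≤ A m i j) (hskip : ∀ m : ℤ, 2 ≤ m → A m = 0)
    (hsum : ∀ i, Summable fun q : ℤ × Fin N => A q.1 i q.2) (hz0 : 0 < z) (hz1 : z ≤ 1)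
    (i j : Fin N) : Summable fun m : ℤ => z ^ (-m) * A m i j := by
  refine Summable.of_nonneg_of_le (fun m => mul_nonneg (zpow_pos hz0 _).le (hA _ _ _))
    (fun m => ?_) (((hsum i).comp_injective (Prod.mk_left_injective j)).mul_left z⁻¹)
  rcases le_or_gt m 1 with hm | hm
  · rw [← zpow_neg_one]
    exact mul_le_mul_of_nonneg_right (zpow_le_zpow_right_of_le_one₀ hz0 hz1 (by omega))
      (hA _ _ _)
  · simp [hskip m (by omega)]

lemma Fmat_apply (z : ℝ) (i j : Fin N) : Fmat A z i j = ∑' m : ℤ, z ^ (-m) * A m i j := by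
  rw [Fmat, Matrix.of_apply, ← (Equiv.neg ℤ).tsum_eq]
  simp

lemma Fmat_nonneg (hA : ∀ m i j, 0 ≤ A m i j) (hz0 : 0 < z) (i j : Fin N) :
    0 ≤ Fmat A z i j := by
  rw [Fmat_apply]
  exact tsum_nonneg fun m => mul_nonneg (zpow_pos hz0 _).le (hA _ _ _)

lemma eFmat_eq_map_ofReal (hA : ∀ m i j, 0 ≤ A m i j) (hskip : ∀ m : ℤ, 2 ≤ m → A m = 0)
    (hsum : ∀ i, Summable fun q : ℤ × Fin N => A q.1 i q.2) (hz0 : 0 < z) (hz1 : z ≤ 1) :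
    eFmat A z = (Fmat A z).map ENNReal.ofReal := by
  ext i j
  rw [Matrix.map_apply, Fmat_apply, ENNReal.ofReal_tsum_of_nonneg
    (fun m => mul_nonneg (zpow_pos hz0 _).le (hA _ _ _))
    (summable_zpow_neg_mul hA hskip hsum hz0 hz1 i j)]
  exact tsum_congr fun m => (ENNReal.ofReal_mul (zpow_pos hz0 _).le).symm

theorem tsum_zWeight_mul_eocc_eq_ofReal (hA : ∀ m i j, 0 ≤ A m i j)
    (hskip : ∀ m : ℤ, 2 ≤ m → A m = 0) (hsum : ∀ i, Summable fun q : ℤ × Fin N => A q.1 i q.2)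
    (hz0 : 0 < z) (hz1 : z ≤ 1) {S : Matrix (Fin N) (Fin N) ℝ}
    (hS : HasSum (fun k : ℕ => Fmat A z ^ k) S) (i j : Fin N) :
    ∑' x, zWeight z x * eocc A x i j = ENNReal.ofReal (S i j) := by
  have hSij : HasSum (fun k => (Fmat A z ^ k) i j) (S i j) :=
    Pi.hasSum.mp (Pi.hasSum.mp hS i) j
  rw [tsum_zWeight_mul_eocc hz0, eFmat_eq_map_ofReal hA hskip hsum hz0 hz1, ← hSij.tsum_eq,
    ENNReal.ofReal_tsum_of_nonneg (fun k => Matrix.pow_apply_nonneg (Fmat_nonneg hA hz0) k i j)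
      hSij.summable]
  simp [Matrix.map_ofReal_pow (Fmat_nonneg hA hz0)]

lemma tsum_prob_eq_toReal (hA : ∀ m i j, 0 ≤ A m i j) (s : S N) (E : ℕ → (ℕ → S N) → Prop)
    (h : ∑' n, eprob A s n (E n) ≠ ⊤) :
    ∑' n, prob A s n (E n) = (∑' n, eprob A s n (E n)).toReal := by
  rw [ENNReal.tsum_toReal_eq fun n => ne_top_of_le_ne_top h (ENNReal.le_tsum n)]
  exact tsum_congr fun n => prob_eq_toReal hA _ _ _

lemma hitMat_one_apply (hA : ∀ m i j, 0 ≤ A m i j) {x : ℤ} {i j : Fin N}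
    (h : ehit A x i j ≠ ⊤) : hitMat A 1 x i j = (ehit A x i j).toReal := by
  simp only [hitMat, Matrix.of_apply, one_pow, one_mul]
  exact tsum_prob_eq_toReal hA _ (fun n p => hitsAt x n p ∧ (p n).2 = j) h

lemma Ltilde_apply (hA : ∀ m i j, 0 ≤ A m i j) {i j : Fin N} (h : eocc A 0 i j ≠ ⊤) :
    Ltilde A i j = (eocc A 0 i j).toReal := by
  simp only [Ltilde, occMat, Matrix.of_apply, one_pow, one_mul]
  exact tsum_prob_eq_toReal hA _ (fun k p => p k = ((0 : ℤ), j)) h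

lemma hitMat_one_mul_Ltilde_apply (hA : ∀ m i j, 0 ≤ A m i j) (h : ∀ x i j, eocc A x i j ≠ ⊤)
    (x : ℤ) (i j : Fin N) : (hitMat A 1 x * Ltilde A) i j = (eocc A x i j).toReal := by
  have hhit (c : Fin N) : ehit A x i c ≠ ⊤ := ne_top_of_le_ne_top (h x i c) (ehit_le_eocc x i c)
  rw [Matrix.mul_apply, eocc_eq_sum_ehit_mul,
    ENNReal.toReal_sum fun c _ => ENNReal.mul_ne_top (hhit c) (h 0 c j)]
  exact Finset.sum_congr rfl fun c _ => by
    rw [hitMat_one_apply hA (hhit c), Ltilde_apply hA (h 0 c j), ENNReal.toReal_mul]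

end ToReal

theorem statement5_general {N : ℕ} (A : ℤ → Matrix (Fin N) (Fin N) ℝ)
    (hA : ∀ m i j, 0 ≤ A m i j)
    (hskip : ∀ m : ℤ, 2 ≤ m → A m = 0)
    (hsum : ∀ i, Summable fun q : ℤ × Fin N => A q.1 i q.2)
    (z : ℝ) (hz0 : 0 < z) (hz1 : z ≤ 1)
    (hspec : ∀ lam ∈ spectrum ℂ ((Fmat A z).map Complex.ofReal), ‖lam‖ < 1) :
    (∀ i j : Fin N,
      Summable fun k : ℕ => prob A ((0 : ℤ), i) k fun p => p k = ((0 : ℤ), j)) ∧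
    IsUnit (1 - Fmat A z) ∧
    HasSum (fun k : ℕ => Fmat A z ^ k) (1 - Fmat A z)⁻¹ ∧
    (∀ i j : Fin N, Summable fun x : ℤ => z ^ (-x) * (hitMat A 1 x * Ltilde A) i j) ∧
    (Matrix.of (fun i j => ∑' x : ℤ, z ^ (-x) * (hitMat A 1 x * Ltilde A) i j) :
        Matrix (Fin N) (Fin N) ℝ) = (1 - Fmat A z)⁻¹ := by
  obtain ⟨hunit, hgeom⟩ :=
    Matrix.hasSum_pow_of_summable (Matrix.summable_pow_of_spectrum_lt_one _ hspec)
  have htotal := tsum_zWeight_mul_eocc_eq_ofReal hA hskip hsum hz0 hz1 hgeom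
  have hfinite (i j : Fin N) := (htotal i j).symm ▸ ENNReal.ofReal_ne_top
  have hocc (x : ℤ) (i j : Fin N) : eocc A x i j ≠ ⊤ := eocc_ne_top hz0 (hfinite i j) x
  have hterm (i j : Fin N) (x : ℤ) :
      z ^ (-x) * (hitMat A 1 x * Ltilde A) i j = (zWeight z x * eocc A x i j).toReal := by
    rw [hitMat_one_mul_Ltilde_apply hA hocc, ENNReal.toReal_mul, toReal_zWeight hz0]
  refine ⟨fun i j => ?_, hunit, hgeom, fun i j => ?_, ?_⟩
  · exact (ENNReal.summable_toReal (hocc 0 i j)).congr fun k => (prob_eq_toReal hA _ _ _).symm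
  · simpa only [hterm] using ENNReal.summable_toReal (hfinite i j)
  · ext i j
    have hnonneg : 0 ≤ (1 - Fmat A z)⁻¹ i j := (Pi.hasSum.mp (Pi.hasSum.mp hgeom i) j).nonneg
      fun k => Matrix.pow_apply_nonneg (Fmat_nonneg hA hz0) k i j
    rw [Matrix.of_apply, tsum_congr (hterm i j), ← ENNReal.tsum_toReal_eq
      (f := fun x => zWeight z x * eocc A x i j) fun x =>
        ENNReal.mul_ne_top ENNReal.ofReal_ne_top (hocc x i j), htotal,
      ENNReal.toReal_ofReal hnonneg]

/-- If the spectral radius of F(z) is < 1 then L̃ is finite,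
Σ_{x∈ℤ} z^{-x} ℙ(J_{τ^{x}}) L̃ converges entrywise, I - F(z) is invertible with
(I-F(z))⁻¹ = Σ_k F(z)^k, and Σ_{x∈ℤ} z^{-x} ℙ(J_{τ^{x}}) L̃ = (I - F(z))⁻¹. -/
theorem statement5 {N : ℕ} (hN : 0 < N) (A : ℤ → Matrix (Fin N) (Fin N) ℝ)
    (hA : ∀ m i j, 0 ≤ A m i j)
    (hskip : ∀ m : ℤ, 2 ≤ m → A m = 0)
    (hsum : ∀ i, Summable fun q : ℤ × Fin N => A q.1 i q.2)
    (hsub : ∀ i, ∑' q : ℤ × Fin N, A q.1 i q.2 ≤ 1)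
    (z : ℝ) (hz0 : 0 < z) (hz1 : z ≤ 1)
    (hspec : ∀ lam ∈ spectrum ℂ ((Fmat A z).map Complex.ofReal), ‖lam‖ < 1) :
    (∀ i j : Fin N,
      Summable fun k : ℕ => prob A ((0 : ℤ), i) k fun p => p k = ((0 : ℤ), j)) ∧
    IsUnit (1 - Fmat A z) ∧
    HasSum (fun k : ℕ => Fmat A z ^ k) (1 - Fmat A z)⁻¹ ∧
    (∀ i j : Fin N, Summable fun x : ℤ => z ^ (-x) * (hitMat A 1 x * Ltilde A) i j) ∧
    (Matrix.of (fun i j => ∑' x : ℤ, z ^ (-x) * (hitMat A 1 x * Ltilde A) i j) :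
        Matrix (Fin N) (Fin N) ℝ) = (1 - Fmat A z)⁻¹ :=
  statement5_general A hA hskip hsum z hz0 hz1 hspec

end MACPaper

end
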